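/- Fix x₀ ∈ ℝ^d and define the transverse-gauge potential A^{(x₀)}_j(x₀ + Z) = Σ_{k=1}^d ( ∫₀¹ B_{kj}(x₀ + τZ)·τ dτ )·Z_k for j = 1,…,d. Then for every integer r ≥ 1, every j, and every Z ∈ ℝ^d, the degree-r homogeneous Taylor term of A^{(x₀)}_j at x₀ is given by: (1/r!)·D^r A^{(x₀)}_j(x₀)[Z,…,Z] = (1/(r+1)) · Σ_{k=1}^d Z_k · (1/(r−1)!)·D^{r−1} B_{kj}(x₀)[Z,…,Z], where D^m f(x₀)[Z,…,Z] denotes the m-th iterated Fréchet derivative of f at x₀ evaluated at m copies of Z (equivalently, Σ_{|α|=r} ∂^α A^{(x₀)}_j(x₀) Z^α/α! = (1/(r+1)) Σ_{|α|=r−1} Σ_k ∂^α B_{kj}(x₀) Z_k Z^α/α!). -/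

import Mathlib

/-
Put `g t = A^{(x₀)}_j(x₀ + tZ)` and `b_k u = B_{kj}(x₀ + uZ)`. The substitution `u = τ t` in the
definition of the transverse gauge gives `t g(t) = Σ_k Z_k ∫₀ᵗ b_k(u) u du`. Differentiating
`r + 1` times at `t = 0`, by Leibniz on the left and by the fundamental theorem of calculus and
Leibniz on the right, gives `(r + 1) g⁽ʳ⁾(0) = r Σ_k Z_k b_k⁽ʳ⁻¹⁾(0)`. Finally the `m`-th
derivative of `t ↦ f(x₀ + tZ)` at `0` is `D^m f(x₀)[Z, …, Z]` for smooth `f`; for `f = A^{(x₀)}_j`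
smoothness follows by differentiating under the integral sign.
-/

open MeasureTheory Filter

noncomputable section

/-- Euclidean space `ℝ^d`. -/
abbrev Rd (d : ℕ) : Type := EuclideanSpace ℝ (Fin d)

/-- Partial derivative in the `j`-th coordinate direction. -/
def pd {d : ℕ} {E : Type*} [NormedAddCommGroup E] [NormedSpace ℝ E]
    (j : Fin d) (f : Rd d → E) (x : Rd d) : E :=
  fderiv ℝ f x (EuclideanSpace.single j 1)

/-- The magnetic field `B_{jk} = ∂_j A_k - ∂_k A_j`. -/
def magField {d : ℕ} (A : Fin d → Rd d → ℝ) (j k : Fin d) (x : Rd d) : ℝ :=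
  pd j (A k) x - pd k (A j) x

/-- The magnetic covariant derivative `(ℏ/i) ∂_j - A_j`. -/
def magD {d : ℕ} (ℏ : ℝ) (A : Fin d → Rd d → ℝ) (j : Fin d) (u : Rd d → ℂ) (x : Rd d) : ℂ :=
  (ℏ : ℂ) / Complex.I * pd j u x - (A j x : ℂ) * u x

/-- The semiclassical magnetic Schrödinger operator
`H_ℏ u = Σ_j ((ℏ/i)∂_j - A_j)² u + ℏ V u`. -/
def schrodinger {d : ℕ} (ℏ : ℝ) (A : Fin d → Rd d → ℝ) (V : Rd d → ℝ)
    (u : Rd d → ℂ) (x : Rd d) : ℂ :=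
  ∑ j, magD ℏ A j (magD ℏ A j u) x + (ℏ : ℂ) * (V x : ℂ) * u x

/-- The L² norm of a function on `ℝ^d` (w.r.t. Lebesgue measure). -/
def l2norm {d : ℕ} (f : Rd d → ℂ) : ℝ :=
  Real.sqrt (∫ x, ‖f x‖ ^ 2)

/-- The gauge function `Φ^{(x₀)}(x₀+Z) = -Σ_j ∫₀¹ A_j(x₀+τZ) Z_j dτ`. -/
def PhiGauge {d : ℕ} (A : Fin d → Rd d → ℝ) (x₀ : Rd d) (x : Rd d) : ℝ :=
  -∑ j, ∫ τ in (0:ℝ)..1, A j (x₀ + τ • (x - x₀)) * (x - x₀) j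

/-- The transverse-gauge potential `A^{(x₀)}_j(x₀+Z) = Σ_k (∫₀¹ B_{kj}(x₀+τZ) τ dτ) Z_k`. -/
def Atrans {d : ℕ} (A : Fin d → Rd d → ℝ) (x₀ : Rd d) (j : Fin d) (x : Rd d) : ℝ :=
  ∑ k, (∫ τ in (0:ℝ)..1, magField A k j (x₀ + τ • (x - x₀)) * τ) * (x - x₀) k

open Metric Set
open scoped ContDiff

universe u

section ParametricIntegral

variable {H : Type u} [NormedAddCommGroup H] [NormedSpace ℝ H] [ProperSpace H]

theorem hasFDerivAt_intervalIntegral_of_contDiff {E : Type*} [NormedAddCommGroup E]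
    [NormedSpace ℝ E] {F : H → ℝ → E}
    (hF : ContDiff ℝ 1 (Function.uncurry F)) (a b : ℝ) (x₀ : H) :
    HasFDerivAt (fun x => ∫ t in a..b, F x t)
      (∫ t in a..b, fderiv ℝ (Function.uncurry F) (x₀, t) ∘L .inl ℝ H ℝ) x₀ := by
  have hFc : Continuous (Function.uncurry F) := hF.continuous
  have hF'c : Continuous fun p : H × ℝ => fderiv ℝ (Function.uncurry F) p ∘L .inl ℝ H ℝ :=
    (hF.continuous_fderiv one_ne_zero).clm_comp continuous_const
  obtain ⟨C, hC⟩ := ((isCompact_closedBall x₀ 1).prod isCompact_uIcc).exists_bound_of_continuousOn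
    (hF'c.continuousOn (s := closedBall x₀ 1 ×ˢ uIcc a b))
  refine intervalIntegral.hasFDerivAt_integral_of_dominated_of_fderiv_le (bound := fun _ => C)
    (ball_mem_nhds x₀ one_pos)
    (Eventually.of_forall fun x => (hFc.comp (Continuous.prodMk_right x)).aestronglyMeasurable)
    ((hFc.comp (Continuous.prodMk_right x₀)).intervalIntegrable a b)
    (hF'c.comp (Continuous.prodMk_right x₀)).aestronglyMeasurable
    (Eventually.of_forall fun t ht x hx =>
      hC (x, t) ⟨ball_subset_closedBall hx, uIoc_subset_uIcc ht⟩)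
    intervalIntegrable_const (Eventually.of_forall fun t _ x _ => ?_)
  exact ((hF.differentiable one_ne_zero) (x, t)).hasFDerivAt.comp x
    ((hasFDerivAt_id x).prodMk (hasFDerivAt_const t x))

theorem contDiff_intervalIntegral_of_contDiff {E : Type u} [NormedAddCommGroup E]
    [NormedSpace ℝ E] [CompleteSpace E] {F : H → ℝ → E} {n : ℕ}
    (hF : ContDiff ℝ n (Function.uncurry F)) (a b : ℝ) :
    ContDiff ℝ n (fun x => ∫ t in a..b, F x t) := by
  induction n generalizing E with
  | zero =>
    exact contDiff_zero.2
      (intervalIntegral.continuous_parametric_intervalIntegral_of_continuous' hF.continuous a b)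
  | succ n ih =>
    have hF1 : ContDiff ℝ 1 (Function.uncurry F) := hF.of_le (by exact_mod_cast le_add_self)
    refine contDiff_succ_iff_hasFDerivAt.2 ⟨_, ?_,
      fun x => hasFDerivAt_intervalIntegral_of_contDiff hF1 a b x⟩
    exact ih ((hF.fderiv_right le_rfl).clm_comp contDiff_const)

end ParametricIntegral

theorem iteratedDeriv_comp_add_smul {𝕜 E F : Type*} [NontriviallyNormedField 𝕜]
    [NormedAddCommGroup E] [NormedSpace 𝕜 E] [NormedAddCommGroup F] [NormedSpace 𝕜 F]
    {n : ℕ} {f : E → F} (hf : ContDiff 𝕜 n f) (x v : E) :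
    iteratedDeriv n (fun t : 𝕜 => f (x + t • v)) 0 = iteratedFDeriv 𝕜 n f x (fun _ => v) := by
  have hline : (fun t : 𝕜 => f (x + t • v)) =
      (fun y => f (x + y)) ∘ (ContinuousLinearMap.id 𝕜 𝕜).smulRight v := rfl
  have hshift : ContDiff 𝕜 n fun y => f (x + y) := hf.comp (contDiff_const.add contDiff_id)
  rw [iteratedDeriv_eq_iteratedFDeriv, hline,
    ContinuousLinearMap.iteratedFDeriv_comp_right _ hshift _ le_rfl,
    ContinuousMultilinearMap.compContinuousLinearMap_apply, iteratedFDeriv_comp_add_left]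
  simp

theorem iteratedDeriv_succ_id_mul_zero {𝕜 : Type*} [NontriviallyNormedField 𝕜] {n : ℕ}
    {f : 𝕜 → 𝕜} (hf : ContDiffAt 𝕜 (n + 1) f 0) :
    iteratedDeriv (n + 1) (fun t => t * f t) 0 = (n + 1) * iteratedDeriv n f 0 := by
  rw [iteratedDeriv_fun_mul contDiffAt_id (by exact_mod_cast hf)]
  simp [iteratedDeriv_fun_id_zero]

theorem iteratedDeriv_succ_primitive {E : Type*} [NormedAddCommGroup E] [NormedSpace ℝ E]
    [CompleteSpace E] {ψ : ℝ → E} (hψ : Continuous ψ) (a : ℝ) (n : ℕ) :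
    iteratedDeriv (n + 1) (fun t => ∫ u in a..t, ψ u) = iteratedDeriv n ψ := by
  rw [iteratedDeriv_succ', funext (hψ.deriv_integral ψ a)]

theorem contDiff_primitive {E : Type*} [NormedAddCommGroup E] [NormedSpace ℝ E]
    [CompleteSpace E] {ψ : ℝ → E} (hψ : ContDiff ℝ ∞ ψ) (a : ℝ) :
    ContDiff ℝ ∞ (fun t => ∫ u in a..t, ψ u) := by
  refine contDiff_infty_iff_deriv.2 ⟨fun t => ?_, ?_⟩
  · exact (intervalIntegral.integral_hasDerivAt_right (hψ.continuous.intervalIntegrable a t)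
      (hψ.continuous.stronglyMeasurableAtFilter _ _) hψ.continuous.continuousAt).differentiableAt
  · rwa [funext (hψ.continuous.deriv_integral ψ a)]

theorem iteratedDeriv_primitive_mul_id_zero {b : ℝ → ℝ} (hb : ContDiff ℝ ∞ b) (n : ℕ) :
    iteratedDeriv (n + 2) (fun t => ∫ u in (0:ℝ)..t, b u * u) 0 =
      (n + 1) * iteratedDeriv n b 0 := by
  rw [show n + 2 = n + 1 + 1 from rfl,
    iteratedDeriv_succ_primitive (ψ := fun u => b u * u) (hb.continuous.mul continuous_id) 0]
  simp only [mul_comm (b _)]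
  exact iteratedDeriv_succ_id_mul_zero (contDiff_infty.1 hb (n + 1)).contDiffAt

theorem integral_comp_mul_mul_id_mul_sq (f : ℝ → ℝ) (t : ℝ) :
    (∫ τ in (0:ℝ)..1, f (τ * t) * τ) * t ^ 2 = ∫ u in (0:ℝ)..t, f u * u := by
  rcases eq_or_ne t 0 with rfl | ht
  · simp
  · have hscale : ∀ τ : ℝ, f (τ * t) * τ = t⁻¹ * (fun u => f u * u) (τ * t) := fun τ => by
      field_simp
    simp only [hscale, intervalIntegral.integral_const_mul,
      intervalIntegral.integral_comp_mul_right (fun u => f u * u) ht, zero_mul, one_mul, smul_eq_mul]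
    field_simp

section MagneticField

variable {d : ℕ} {A : Fin d → Rd d → ℝ}

theorem contDiff_pd {E : Type*} [NormedAddCommGroup E] [NormedSpace ℝ E] {f : Rd d → E}
    (hf : ContDiff ℝ ∞ f) (j : Fin d) : ContDiff ℝ ∞ (pd j f) :=
  (hf.fderiv_right (by simp)).clm_apply contDiff_const

theorem contDiff_magField (hA : ∀ j, ContDiff ℝ ∞ (A j)) (k j : Fin d) :
    ContDiff ℝ ∞ (magField A k j) :=
  (contDiff_pd (hA j) k).sub (contDiff_pd (hA k) j)

theorem mul_Atrans_add_smul (x₀ Z : Rd d) (j : Fin d) (t : ℝ) :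
    t * Atrans A x₀ j (x₀ + t • Z) =
      ∑ k, Z k * ∫ u in (0:ℝ)..t, magField A k j (x₀ + u • Z) * u := by
  simp only [Atrans, add_sub_cancel_left, smul_smul, Finset.mul_sum]
  refine Finset.sum_congr rfl fun k _ => ?_
  rw [← integral_comp_mul_mul_id_mul_sq (fun u => magField A k j (x₀ + u • Z)) t,
    PiLp.smul_apply, smul_eq_mul]
  ring

theorem contDiff_Atrans (hA : ∀ j, ContDiff ℝ ∞ (A j)) (x₀ : Rd d) (j : Fin d) :
    ContDiff ℝ ∞ (Atrans A x₀ j) := by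
  refine ContDiff.sum fun k _ => ContDiff.mul ?_
    ((EuclideanSpace.proj k : Rd d →L[ℝ] ℝ).contDiff.comp (contDiff_id.sub contDiff_const))
  have hF : ContDiff ℝ ∞ fun p : Rd d × ℝ => magField A k j (x₀ + p.2 • (p.1 - x₀)) * p.2 :=
    ((contDiff_magField hA k j).comp
      (contDiff_const.add (contDiff_snd.smul (contDiff_fst.sub contDiff_const)))).mul contDiff_snd
  exact contDiff_infty.2 fun n =>
    contDiff_intervalIntegral_of_contDiff (contDiff_infty.1 hF n) 0 1

theorem two_add_mul_iteratedFDeriv_Atrans (hA : ∀ j, ContDiff ℝ ∞ (A j)) (x₀ Z : Rd d)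
    (j : Fin d) (n : ℕ) :
    ((n : ℝ) + 2) * iteratedFDeriv ℝ (n + 1) (Atrans A x₀ j) x₀ (fun _ => Z) =
      (n + 1) * ∑ k, Z k * iteratedFDeriv ℝ n (magField A k j) x₀ (fun _ => Z) := by
  have hline : ContDiff ℝ ∞ fun t : ℝ => x₀ + t • Z :=
    contDiff_const.add (contDiff_id.smul contDiff_const)
  set g : ℝ → ℝ := fun t => Atrans A x₀ j (x₀ + t • Z) with hg
  set b : Fin d → ℝ → ℝ := fun k u => magField A k j (x₀ + u • Z) with hb
  have hAtrans := contDiff_Atrans hA x₀ j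
  have hgsmooth : ContDiff ℝ ∞ g := hAtrans.comp hline
  have hbsmooth : ∀ k, ContDiff ℝ ∞ (b k) := fun k => (contDiff_magField hA k j).comp hline
  have hprim : ∀ k, ContDiff ℝ ∞ fun t => ∫ u in (0:ℝ)..t, b k u * u :=
    fun k => contDiff_primitive ((hbsmooth k).mul contDiff_id) 0
  calc _ = iteratedDeriv (n + 1 + 1) (fun t => t * g t) 0 := by
        rw [iteratedDeriv_succ_id_mul_zero (contDiff_infty.1 hgsmooth _).contDiffAt, hg,
          iteratedDeriv_comp_add_smul (contDiff_infty.1 hAtrans _)]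
        push_cast; ring
    _ = iteratedDeriv (n + 2) (fun t => ∑ k, Z k * ∫ u in (0:ℝ)..t, b k u * u) 0 := by
        simp only [hg, hb, mul_Atrans_add_smul]
    _ = ∑ k, Z k * iteratedDeriv (n + 2) (fun t => ∫ u in (0:ℝ)..t, b k u * u) 0 := by
        rw [iteratedDeriv_fun_sum fun k _ =>
          (contDiff_infty.1 (contDiff_const.mul (hprim k)) _).contDiffAt]
        exact Finset.sum_congr rfl fun k _ =>
          iteratedDeriv_const_mul _ (contDiff_infty.1 (hprim k) _).contDiffAt
    _ = _ := by
        rw [Finset.mul_sum]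
        refine Finset.sum_congr rfl fun k _ => ?_
        rw [iteratedDeriv_primitive_mul_id_zero (hbsmooth k), hb,
          iteratedDeriv_comp_add_smul (contDiff_infty.1 (contDiff_magField hA k j) _)]
        ring

end MagneticField

/-- the homogeneous Taylor terms of the transverse-gauge potential:
for `r ≥ 1`, `(1/r!) D^r A^{(x₀)}_j(x₀)[Z,…,Z]
  = (1/(r+1)) Σ_k Z_k (1/(r-1)!) D^{r-1} B_{kj}(x₀)[Z,…,Z]`. -/
theorem statement8 (d : ℕ) (A : Fin d → Rd d → ℝ)
    (hA : ∀ j, ContDiff ℝ (⊤ : ℕ∞) (A j)) (x₀ : Rd d)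
    (r : ℕ) (hr : 1 ≤ r) (j : Fin d) (Z : Rd d) :
    ((r.factorial : ℝ))⁻¹ * iteratedFDeriv ℝ r (Atrans A x₀ j) x₀ (fun _ => Z) =
      ((r : ℝ) + 1)⁻¹ * ∑ k, Z k *
        ((((r - 1).factorial : ℝ))⁻¹ *
          iteratedFDeriv ℝ (r - 1) (magField A k j) x₀ (fun _ => Z)) := by
  obtain ⟨n, rfl⟩ : ∃ n, r = n + 1 := ⟨r - 1, by omega⟩
  have key := two_add_mul_iteratedFDeriv_Atrans hA x₀ Z j n
  rw [Nat.add_sub_cancel, Nat.factorial_succ]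
  simp_rw [mul_left_comm (Z _), ← Finset.mul_sum]
  push_cast
  field_simp
  linear_combination key
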